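/- arXiv:2603.24546 — 5 statements merged into one kernel-verified Lean document; each statement's English description precedes it below -/
import Mathlib

section
/- Let A be an r × s matrix over a finite field 𝔽_q with r ≤ s such that every minor of A (of every size) is nonzero. Then for every nonzero row vector u ∈ 𝔽_q^r, the Hamming weight of uA satisfies wt(uA) ≥ s − wt(u) + 1. -/
/-- A family of row vectors (a matrix with rows indexed by `ι` and columns by `κ`)
is *superregular* if every square submatrix, obtained by selecting rows and columns
injectively, has nonzero determinant; equivalently all minors of all sizes are nonzero. -/
def SuperregularFamily {F ι κ : Type*} [CommRing F] (M : ι → κ → F) : Prop :=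
  ∀ (t : ℕ) (r : Fin t → ι) (c : Fin t → κ),
    Function.Injective r → Function.Injective c →
      Matrix.det (Matrix.of fun a b => M (r a) (c b)) ≠ 0

open Classical in
/-- Hamming weight of a vector: the number of nonzero entries. -/
noncomputable def hWt {F : Type*} [Zero F] {n : ℕ} (v : Fin n → F) : ℕ :=
  (Finset.univ.filter fun i => v i ≠ 0).card

/-- If `A` is a superregular `r × s` matrix over a finite field with `r ≤ s`,
then for every nonzero row vector `u`, `wt(uA) ≥ s − wt(u) + 1`. -/
theorem superregular_weight_lower_bound {F : Type*} [Field F] [Fintype F] {r s : ℕ}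
    (hrs : r ≤ s) (A : Fin r → Fin s → F) (hA : SuperregularFamily A)
    (u : Fin r → F) (hu : u ≠ 0) :
    s - hWt u + 1 ≤ hWt (fun j => ∑ i, u i * A i j) := by
  classical
  set S : Finset (Fin r) := Finset.univ.filter fun i => u i ≠ 0 with hS
  set w : ℕ := S.card with hw
  have hwS : hWt u = w := by simp [hWt, hw, hS]
  have hws : w ≤ s := le_trans (le_trans (Finset.card_le_univ S) (by simp)) hrs
  by_contra hcon
  push_neg at hcon
  have hwt : hWt (fun j => ∑ i, u i * A i j) ≤ s - w := by omega
  -- the set of zero coordinates of uA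
  set Z : Finset (Fin s) := Finset.univ.filter fun j => (∑ i, u i * A i j) = 0 with hZ
  have hZcard : hWt (fun j => ∑ i, u i * A i j) + Z.card = s := by
    have := Finset.card_filter_add_card_filter_not
      (s := (Finset.univ : Finset (Fin s))) (p := fun j => (∑ i, u i * A i j) ≠ 0)
    simp only [Finset.card_univ, Fintype.card_fin] at this
    simpa [hWt, hZ, Finset.filter_congr_decidable, not_not] using this
  have hwZ : w ≤ Z.card := by omega
  obtain ⟨T, hTZ, hTcard⟩ := Finset.exists_subset_card_eq hwZ
  -- row and column selections
  have hTcard' : T.card = w := hTcard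
  let rmap : Fin w → Fin r := fun a => (S.orderIsoOfFin rfl a : Fin r)
  let cmap : Fin w → Fin s := fun a => (T.orderIsoOfFin hTcard' a : Fin s)
  have hrinj : Function.Injective rmap := fun a b h => by
    apply (S.orderIsoOfFin rfl).injective
    exact Subtype.ext h
  have hcinj : Function.Injective cmap := fun a b h => by
    apply (T.orderIsoOfFin hTcard').injective
    exact Subtype.ext h
  have hdet := hA w rmap cmap hrinj hcinj
  apply hdet
  rw [← Matrix.exists_vecMul_eq_zero_iff]
  refine ⟨fun a => u (rmap a), ?_, ?_⟩
  · -- nonzero vector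
    have hwpos : 0 < w := by
      rcases Function.ne_iff.mp hu with ⟨i, hi⟩
      have hi' : u i ≠ 0 := fun h => hi (by simp [h])
      have : i ∈ S := by simp [hS, hi']
      exact Finset.card_pos.mpr ⟨i, this⟩
    intro h
    have := congrFun h ⟨0, hwpos⟩
    rw [Pi.zero_apply] at this
    have hmem : rmap ⟨0, hwpos⟩ ∈ S := (S.orderIsoOfFin rfl ⟨0, hwpos⟩).2
    rw [hS] at hmem
    simp only [Finset.mem_filter] at hmem
    exact hmem.2 this
  · funext b
    have hsum : ∑ a : Fin w, u (rmap a) * A (rmap a) (cmap b)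
        = ∑ i ∈ S, u i * A i (cmap b) := by
      have h := Equiv.sum_comp (S.orderIsoOfFin rfl).toEquiv
        (fun i : S => u (i : Fin r) * A (i : Fin r) (cmap b))
      rw [Finset.sum_coe_sort S (fun i => u i * A i (cmap b))] at h
      exact h
    have hfull : ∑ i ∈ S, u i * A i (cmap b) = ∑ i, u i * A i (cmap b) := by
      apply Finset.sum_subset (Finset.subset_univ S)
      intro i _ hi
      have : u i = 0 := by
        by_contra h
        exact hi (by simp [hS, h])
      simp [this]
    have hzero : (∑ i, u i * A i (cmap b)) = 0 := by
      have : cmap b ∈ Z := hTZ (T.orderIsoOfFin hTcard' b).2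
      simpa [hZ] using this
    simp only [Matrix.vecMul, dotProduct, Matrix.of_apply, Pi.zero_apply]
    rw [hsum, hfull, hzero]
end

section
/- Let R = 𝔽₂[z₁, z₂] and let C be the 2D convolutional code generated by the matrix G = [[1, z₁, 0], [1, z₂, 1]] ∈ R^{2×3}. Then every generator matrix of C has external degree at least 2; hence the degree of C is 2. -/
open MvPolynomial

/-- The polynomial ring `𝔽₂[z₁, z₂]`. -/
noncomputable abbrev R2 : Type := MvPolynomial (Fin 2) (ZMod 2)

/-- The generator matrix `G = [[1, z₁, 0], [1, z₂, 1]]`. -/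
noncomputable def Gex : Matrix (Fin 2) (Fin 3) R2 :=
  !![1, X 0, 0; 1, X 1, 1]

/-- The row degree of a polynomial row vector: the maximal total degree of its entries. -/
def rowDegMv {F : Type*} [CommSemiring F] {m n : ℕ}
    (v : Fin n → MvPolynomial (Fin m) F) : ℕ :=
  Finset.univ.sup fun j => (v j).totalDegree

lemma eq_C_of_totalDegree_eq_zero {σ R : Type*} [CommSemiring R]
    {p : MvPolynomial σ R} (h : p.totalDegree = 0) : p = C (coeff 0 p) := by
  classical
  ext d
  by_cases hd : d = 0
  · simp [hd]
  · rw [coeff_eq_zero_of_totalDegree_lt, coeff_C, if_neg (Ne.symm hd)]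
    rw [h]
    obtain ⟨i, hi⟩ := Finsupp.ne_iff.mp hd
    simp only [Finsupp.coe_zero, Pi.zero_apply] at hi
    have hmem : i ∈ d.support := Finsupp.mem_support_iff.mpr hi
    calc 0 < d i := Nat.pos_of_ne_zero hi
      _ ≤ ∑ j ∈ d.support, d j := Finset.single_le_sum (fun _ _ => Nat.zero_le _) hmem

lemma range_gex : (Set.range fun i => Gex i) = {Gex 0, Gex 1} := by
  ext x
  constructor
  · rintro ⟨i, rfl⟩
    fin_cases i <;> simp
  · rintro (rfl | rfl)
    exacts [⟨0, rfl⟩, ⟨1, rfl⟩]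

/-- For the 2D convolutional code `C` generated by
`G = [[1, z₁, 0], [1, z₂, 1]]` over `𝔽₂[z₁,z₂]`, every generator matrix of `C`
has external degree (sum of row degrees) at least `2`; since `G` itself has external
degree `2`, the degree of `C` is `2`. -/
theorem degree_of_example_code_is_two :
    (∀ G' : Matrix (Fin 2) (Fin 3) R2,
        LinearIndependent R2 (fun i => G' i) →
        Submodule.span R2 (Set.range fun i => G' i) =
          Submodule.span R2 (Set.range fun i => Gex i) →
        2 ≤ ∑ i, rowDegMv (fun j => G' i j)) ∧
      (∑ i, rowDegMv (fun j => Gex i j)) = 2 := by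
  constructor
  · intro G' hli hspan
    by_contra hlt
    push_neg at hlt
    rw [Fin.sum_univ_two] at hlt
    have hzero : ∃ i : Fin 2, rowDegMv (fun j => G' i j) = 0 := by
      rcases Nat.eq_zero_or_pos (rowDegMv fun j => G' 0 j) with h | h
      · exact ⟨0, h⟩
      · exact ⟨1, by omega⟩
    obtain ⟨i, hi⟩ := hzero
    have hdeg : ∀ j : Fin 3, (G' i j).totalDegree = 0 := by
      intro j
      have hi' : (Finset.univ.sup fun j => (G' i j).totalDegree) = 0 := hi
      exact Nat.le_zero.mp
        (hi' ▸ Finset.le_sup (f := fun j => (G' i j).totalDegree) (Finset.mem_univ j))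
    have hmem : G' i ∈ Submodule.span R2 ({Gex 0, Gex 1} : Set (Fin 3 → R2)) := by
      rw [← range_gex, ← hspan]
      exact Submodule.subset_span ⟨i, rfl⟩
    obtain ⟨a, b, hab⟩ := Submodule.mem_span_pair.mp hmem
    have h0 : a + b = G' i 0 := by
      have := congrFun hab 0
      simpa [Gex] using this
    have h1 : a * X 0 + b * X 1 = G' i 1 := by
      have := congrFun hab 1
      simpa [Gex] using this
    have h2 : b = G' i 2 := by
      have := congrFun hab 2
      simpa [Gex] using this
    have hbdeg : b.totalDegree = 0 := h2 ▸ hdeg 2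
    have hadeg : a.totalDegree = 0 := by
      have ha : a = G' i 0 - b := by rw [← h0]; ring
      rw [ha]
      have := totalDegree_sub (G' i 0) b
      rw [hdeg 0, hbdeg] at this
      omega
    have hbC := eq_C_of_totalDegree_eq_zero hbdeg
    have haC := eq_C_of_totalDegree_eq_zero hadeg
    have h1C' := eq_C_of_totalDegree_eq_zero (hdeg 1)
    have key : a * X 0 + b * X 1 = C (coeff 0 (G' i 1)) := by
      rw [h1]; exact h1C'
    have hne0 : ¬ ((0 : Fin 2 →₀ ℕ) = Finsupp.single (0 : Fin 2) 1) := by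
      intro h; simpa using (Finsupp.single_eq_zero.mp h.symm)
    have hne1 : ¬ ((0 : Fin 2 →₀ ℕ) = Finsupp.single (1 : Fin 2) 1) := by
      intro h; simpa using (Finsupp.single_eq_zero.mp h.symm)
    have hca : coeff 0 a = 0 := by
      have := congrArg (coeff (Finsupp.single 0 1)) key
      simpa [coeff_mul_X', coeff_C, hne0] using this
    have hcb : coeff 0 b = 0 := by
      have := congrArg (coeff (Finsupp.single 1 1)) key
      simpa [coeff_mul_X', coeff_C, hne1] using this
    have ha0 : a = 0 := by rw [haC, hca, map_zero]
    have hb0 : b = 0 := by rw [hbC, hcb, map_zero]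
    have : G' i = 0 := by rw [← hab, ha0, hb0]; simp
    exact hli.ne_zero i this
  · rw [Fin.sum_univ_two]
    have h0 : rowDegMv (fun j => Gex 0 j) = 1 := by
      rw [rowDegMv]
      apply le_antisymm
      · apply Finset.sup_le
        intro j _
        fin_cases j <;> simp [Gex]
      · have h : (1:ℕ) ≤ (Gex 0 1).totalDegree := by simp [Gex]
        exact le_trans h (Finset.le_sup (f := fun j => (Gex 0 j).totalDegree)
          (Finset.mem_univ 1))
    have h1 : rowDegMv (fun j => Gex 1 j) = 1 := by
      rw [rowDegMv]
      apply le_antisymm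
      · apply Finset.sup_le
        intro j _
        fin_cases j <;> simp [Gex]
      · have h : (1:ℕ) ≤ (Gex 1 1).totalDegree := by simp [Gex]
        exact le_trans h (Finset.le_sup (f := fun j => (Gex 1 j).totalDegree)
          (Finset.mem_univ 1))
    rw [h0, h1]
end

section
/- Let C be an mD finite-support convolutional code of rate k/n and degree δ, i.e., a free 𝔽_q[z₁,…,z_m]-submodule of 𝔽_q[z₁,…,z_m]^n of rank k admitting a generator matrix of external degree δ. Then the free distance of C satisfies d_free(C) ≤ n · (⌊δ/k⌋ + m)!/(⌊δ/k⌋! · m!) − k(⌊δ/k⌋ + 1) + δ + 1. -/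
/-- The weight of a polynomial vector `w ∈ R^n`, `R = 𝔽_q[z₁,…,z_m]`: the total number
of nonzero field coefficients over all components and all multidegrees. -/
def wtMv {F : Type*} [CommSemiring F] {m n : ℕ}
    (w : Fin n → MvPolynomial (Fin m) F) : ℕ :=
  ∑ j, (w j).support.card

/-!
Put `ℓ = ⌊δ/k⌋` and let `νᵢ` be the row degrees of `G`. The messages `u` with
`deg uᵢ + νᵢ ≤ ℓ` are spanned by the monomial messages `z^d eᵢ`, at least `k(ℓ+1) - δ` of them,
and their codewords `uG` have all entries of total degree at most `ℓ`. Hence the encoder,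
read off on the coefficients, is an `F`-linear map from a space of dimension
`D ≥ k(ℓ+1) - δ` into `F^N` with `N = n·C(ℓ+m, m)`, and the Singleton argument applies:
a nonzero message whose codeword vanishes on `D - 1` prescribed coordinates exists by
rank–nullity, and its codeword has weight at most `N - D + 1`.
-/

open Finset Module MvPolynomial Matrix Submodule

theorem LinearMap.exists_ne_zero_hammingNorm_le {K V ι : Type*} [Field K] [AddCommGroup V]
    [Module K V] [FiniteDimensional K V] [Fintype ι] [DecidableEq K] (f : V →ₗ[K] ι → K)
    (hV : 0 < finrank K V) :
    ∃ v ≠ 0, hammingNorm (f v) ≤ Fintype.card ι + 1 - finrank K V := by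
  classical
  obtain ⟨T, -, hT⟩ := exists_subset_card_eq
    (min_le_right (finrank K V - 1) (univ : Finset ι).card)
  rw [card_univ] at hT
  let restrictT : V →ₗ[K] T → K := (LinearMap.pi fun t : T => LinearMap.proj t.1) ∘ₗ f
  have hker : LinearMap.ker restrictT ≠ ⊥ := LinearMap.ker_ne_bot_of_finrank_lt <| by
    rw [finrank_fintype_fun_eq_card, Fintype.card_coe]; omega
  obtain ⟨v, hv, hv0⟩ := (Submodule.ne_bot_iff _).mp hker
  have hvT : ∀ t ∈ T, f v t = 0 := fun t ht => congrFun hv ⟨t, ht⟩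
  have hsupp : hammingNorm (f v) ≤ #Tᶜ :=
    card_le_card fun i hi => mem_compl.mpr fun hiT => (mem_filter.mp hi).2 (hvT i hiT)
  rw [card_compl] at hsupp
  exact ⟨v, hv0, by omega⟩

noncomputable def monomialsDegLE (σ : Type*) [Fintype σ] [DecidableEq σ] (ℓ : ℕ) :
    Finset (σ →₀ ℕ) :=
  (range (ℓ + 1)).biUnion fun t => univ.finsuppAntidiag t

section monomialsDegLE
variable {σ : Type*} [Fintype σ] [DecidableEq σ] {ℓ : ℕ}

theorem mem_monomialsDegLE {d : σ →₀ ℕ} : d ∈ monomialsDegLE σ ℓ ↔ d.degree ≤ ℓ := by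
  simp [monomialsDegLE, Finsupp.degree_eq_sum]

theorem card_monomialsDegLE :
    #(monomialsDegLE σ ℓ) = (Fintype.card σ + 1).multichoose ℓ := by
  induction ℓ with
  | zero => simp [monomialsDegLE]
  | succ ℓ ih =>
    rw [monomialsDegLE, range_add_one, biUnion_insert, card_union_of_disjoint,
      ← monomialsDegLE, ih, card_finsuppAntidiag_nat_eq_multichoose, card_univ,
      Nat.multichoose_succ_succ]
    refine disjoint_left.mpr fun d hd hd' => ?_
    simp only [mem_finsuppAntidiag, mem_biUnion, mem_range] at hd hd'
    obtain ⟨t, ht, hdt, -⟩ := hd'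
    omega

theorem succ_le_card_monomialsDegLE [Nonempty σ] : ℓ + 1 ≤ #(monomialsDegLE σ ℓ) := by
  obtain ⟨i⟩ := ‹Nonempty σ›
  calc ℓ + 1 = #(range (ℓ + 1)) := (card_range _).symm
    _ ≤ _ := card_le_card_of_injOn (Finsupp.single i)
      (fun t ht => by simpa [mem_monomialsDegLE, Nat.lt_succ_iff] using ht)
      (Finsupp.single_injective i).injOn

theorem support_subset_monomialsDegLE {F : Type*} [CommSemiring F] {p : MvPolynomial σ F}
    (hp : p.totalDegree ≤ ℓ) : p.support ⊆ monomialsDegLE σ ℓ :=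
  fun _ hd => mem_monomialsDegLE.mpr ((le_totalDegree hd).trans hp)

end monomialsDegLE

theorem wtMv_eq_hammingNorm {F : Type*} [CommSemiring F] [DecidableEq F] {m n : ℕ}
    {w : Fin n → MvPolynomial (Fin m) F} {B : Finset (Fin m →₀ ℕ)}
    (hw : ∀ j, (w j).support ⊆ B) :
    wtMv w = hammingNorm fun p : Fin n × B => (w p.1).coeff p.2 := by
  rw [hammingNorm, card_filter, Fintype.sum_prod_type, wtMv]
  refine sum_congr rfl fun j _ => ?_
  rw [sum_coe_sort B (fun d => if (w j).coeff d ≠ 0 then 1 else 0), ← card_filter]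
  simp_rw [← MvPolynomial.mem_support_iff, filter_mem_eq_inter, inter_eq_right.mpr (hw j)]

/-- The exponents `(i, d)` of the monomial messages `z^d eᵢ` that, against a row of degree
`ν i`, stay within total degree `ℓ`. -/
noncomputable def admissibleExponents (σ : Type*) [Fintype σ] [DecidableEq σ] {ι : Type*}
    [Fintype ι] (ν : ι → ℕ) (ℓ : ℕ) : Finset (Σ _ : ι, σ →₀ ℕ) :=
  ({i | ν i ≤ ℓ} : Finset ι).sigma fun i => monomialsDegLE σ (ℓ - ν i)

section admissibleExponents
variable {σ ι : Type*} [Fintype σ] [DecidableEq σ] [Fintype ι] {ν : ι → ℕ} {ℓ : ℕ}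

theorem mem_admissibleExponents {e : Σ _ : ι, σ →₀ ℕ} :
    e ∈ admissibleExponents σ ν ℓ ↔ ν e.1 + e.2.degree ≤ ℓ := by
  simp only [admissibleExponents, mem_sigma, mem_filter_univ, mem_monomialsDegLE]
  omega

theorem card_mul_succ_le_card_admissibleExponents_add [Nonempty σ] (ν : ι → ℕ) (ℓ : ℕ) :
    Fintype.card ι * (ℓ + 1) ≤ #(admissibleExponents σ ν ℓ) + ∑ i, ν i := by
  have hrow (i : ι) :
      ℓ + 1 ≤ (if ν i ≤ ℓ then #(monomialsDegLE σ (ℓ - ν i)) else 0) + ν i := by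
    split_ifs
    · have := succ_le_card_monomialsDegLE (σ := σ) (ℓ := ℓ - ν i)
      omega
    · omega
  rw [admissibleExponents, card_sigma, sum_filter, ← sum_add_distrib, ← card_univ,
    ← smul_eq_mul, ← sum_const]
  exact sum_le_sum fun i _ => hrow i

end admissibleExponents

noncomputable def monomialSpan (F : Type*) {σ ι : Type*} [Field F] [DecidableEq ι]
    (E : Finset (Σ _ : ι, σ →₀ ℕ)) : Submodule F (ι → MvPolynomial σ F) :=
  span F (Set.range fun e : E => Pi.single e.1.1 (monomial e.1.2 1))

section monomialSpan
variable {F σ ι : Type*} [Field F] [DecidableEq ι]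

instance (E : Finset (Σ _ : ι, σ →₀ ℕ)) : FiniteDimensional F (monomialSpan F E) :=
  FiniteDimensional.span_of_finite F (Set.finite_range _)

theorem finrank_monomialSpan [Fintype ι] (E : Finset (Σ _ : ι, σ →₀ ℕ)) :
    finrank F (monomialSpan F E) = #E := by
  have hli := (Pi.basis fun _ : ι => basisMonomials σ F).linearIndependent.comp _
    Subtype.val_injective (ι' := E)
  simp only [Function.comp_def, Pi.basis_apply, coe_basisMonomials] at hli
  rw [monomialSpan, finrank_span_eq_card hli, Fintype.card_coe]

theorem totalDegree_vecMul_le_of_mem_monomialSpan {m n : ℕ} [Fintype ι]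
    {G : Matrix ι (Fin n) (MvPolynomial (Fin m) F)} {E : Finset (Σ _ : ι, Fin m →₀ ℕ)}
    {ℓ : ℕ} (hE : ∀ e ∈ E, rowDegMv (G e.1) + e.2.degree ≤ ℓ)
    {u : ι → MvPolynomial (Fin m) F} (hu : u ∈ monomialSpan F E) (j : Fin n) :
    ((u ᵥ* G) j).totalDegree ≤ ℓ := by
  suffices monomialSpan F E ≤ (pi Set.univ fun _ => restrictTotalDegree (Fin m) F ℓ).comap
      ((vecMulLinear G).restrictScalars F) from
    (mem_restrictTotalDegree _ _ _).mp (this hu j (Set.mem_univ j))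
  refine span_le.mpr ?_
  rintro _ ⟨⟨⟨i, d⟩, he⟩, rfl⟩ j -
  simp only [SetLike.mem_coe, mem_restrictTotalDegree, LinearMap.coe_restrictScalars,
    coe_vecMulLinear, single_vecMul, Pi.smul_apply, row_apply, smul_eq_mul]
  have hGij : (G i j).totalDegree ≤ rowDegMv (G i) :=
    le_sup (f := fun j => (G i j).totalDegree) (mem_univ j)
  have hd : (monomial d (1 : F)).totalDegree ≤ d.degree := totalDegree_monomial_le d 1
  have hmul := totalDegree_mul (monomial d (1 : F)) (G i j)
  have hid : rowDegMv (G i) + d.degree ≤ ℓ := hE _ he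
  omega

end monomialSpan

theorem mD_generalized_Singleton_bound_general {F : Type*} [Field F] {m k n δ : ℕ}
    (hm : 1 ≤ m) (hk : 1 ≤ k)
    (G : Matrix (Fin k) (Fin n) (MvPolynomial (Fin m) F))
    (hδ : ∑ i, rowDegMv (fun j => G i j) = δ) :
    ∃ u : Fin k → MvPolynomial (Fin m) F, u ≠ 0 ∧
      wtMv (fun j => ∑ i, u i * G i j) ≤
        n * ((δ / k + m).factorial / ((δ / k).factorial * m.factorial))
          - k * (δ / k + 1) + δ + 1 := by
  classical
  have hδlt : δ < k * (δ / k + 1) := Nat.lt_mul_div_succ δ hk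
  generalize δ / k = ℓ at hδlt ⊢
  set E := admissibleExponents (Fin m) (fun i => rowDegMv (G i)) ℓ
  have : Nonempty (Fin m) := Fin.pos_iff_nonempty.mp hm
  have hE : k * (ℓ + 1) ≤ #E + δ := by
    simpa [hδ] using card_mul_succ_le_card_admissibleExponents_add (σ := Fin m)
      (fun i => rowDegMv (G i)) ℓ
  have hB : #(monomialsDegLE (Fin m) ℓ) = (ℓ + m).factorial / (ℓ.factorial * m.factorial) := by
    rw [card_monomialsDegLE, Nat.multichoose_eq, Fintype.card_fin,
      show m + 1 + ℓ - 1 = ℓ + m by omega,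
      Nat.choose_eq_factorial_div_factorial (Nat.le_add_right ℓ m), Nat.add_sub_cancel_left]
  let coeffs : monomialSpan F E →ₗ[F] Fin n × monomialsDegLE (Fin m) ℓ → F :=
    LinearMap.pi fun p => lcoeff F p.2.1 ∘ₗ LinearMap.proj p.1 ∘ₗ
      (vecMulLinear G).restrictScalars F ∘ₗ (monomialSpan F E).subtype
  obtain ⟨⟨u, hu⟩, hu0, hwt⟩ :=
    coeffs.exists_ne_zero_hammingNorm_le (by rw [finrank_monomialSpan]; omega)
  rw [Fintype.card_prod, Fintype.card_fin, Fintype.card_coe, finrank_monomialSpan, hB] at hwt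
  have hdeg := totalDegree_vecMul_le_of_mem_monomialSpan
    (fun e he => mem_admissibleExponents.mp he) hu
  refine ⟨u, by simpa using hu0, ?_⟩
  calc wtMv (u ᵥ* G) = hammingNorm (coeffs ⟨u, hu⟩) :=
        wtMv_eq_hammingNorm fun j => support_subset_monomialsDegLE (hdeg j)
    _ ≤ _ := hwt
    _ ≤ _ := by omega

/-- mD generalized Singleton bound. Let `C` be an mD finite-support
convolutional code of rate `k/n` and degree `δ`, i.e. a free submodule of
`𝔽_q[z₁,…,z_m]^n` with a generator matrix `G` (rows linearly independent) of external
degree `δ`. Then the free distance of `C` is at most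
`n·(⌊δ/k⌋+m)!/(⌊δ/k⌋!·m!) − k(⌊δ/k⌋+1) + δ + 1`; that is, there exists a nonzero
codeword of weight at most this bound. -/
theorem mD_generalized_Singleton_bound {F : Type*} [Field F] [Fintype F] {m k n δ : ℕ}
    (hm : 1 ≤ m) (hk : 1 ≤ k)
    (G : Matrix (Fin k) (Fin n) (MvPolynomial (Fin m) F))
    (hG : LinearIndependent (MvPolynomial (Fin m) F) (fun i => G i))
    (hδ : ∑ i, rowDegMv (fun j => G i j) = δ) :
    ∃ u : Fin k → MvPolynomial (Fin m) F, u ≠ 0 ∧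
      wtMv (fun j => ∑ i, u i * G i j) ≤
        n * ((δ / k + m).factorial / ((δ / k).factorial * m.factorial))
          - k * (δ / k + 1) + δ + 1 :=
  mD_generalized_Singleton_bound_general hm hk G hδ
end

section
/- Let G(z) = Σ_{i=0}^{δ} G_i z^i ∈ 𝔽_q[z]^{1×n} with G_δ ≠ 0 and n ≥ δ + 1. If the (δ+1) × n matrix Φ₁(G) whose rows are G₀, G₁, …, G_δ is superregular, then the 1D convolutional code generated by G(z) has free distance equal to n(δ+1), i.e., every nonzero codeword u(z)G(z) with u(z) ∈ 𝔽_q[z] \ {0} has weight at least n(δ+1). -/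
/-- The weight of a vector of univariate polynomials: the total number of nonzero
field coefficients over all components and all degrees. -/
def wtP {F : Type*} [Semiring F] {n : ℕ} (w : Fin n → Polynomial F) : ℕ :=
  ∑ j, (w j).support.card

/-!
The coefficients of `v = u·G` are `v_t = Σ_{i ≤ δ} u_{t-i} G_i`, a combination of the rows of
`Φ₁(G)` with coefficient window `x_t = (u_t, u_{t-1}, …, u_{t-δ})`. By superregularity a nonzero
combination with `s` nonzero coefficients vanishes in fewer than `s` columns, so `v_t` has more
than `n - s_t` nonzero entries whenever `x_t ≠ 0`. The window is nonzero for `t ∈ supp u` and for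
the `δ` degrees just above `deg u`, that is at least `w + δ` times where `w = #supp u`, while the
windows carry `(δ+1)·w` nonzero entries in total. Summing,
`wt(v) ≥ (w+δ)(n+1) - (δ+1)w = n(δ+1) + (w-1)(n-δ) ≥ n(δ+1)`.
-/

open Finset Polynomial

theorem SuperregularFamily.card_lt_card_sum_ne_zero_add_card_ne_zero {F ι κ : Type*} [Field F]
    [DecidableEq F] [Fintype ι] [Fintype κ] {M : ι → κ → F} (hM : SuperregularFamily M)
    {x : ι → F} (hx : x ≠ 0) :
    Fintype.card κ < #{j | ∑ i, x i * M i j ≠ 0} + #{i | x i ≠ 0} := by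
  set S : Finset ι := {i | x i ≠ 0}
  set Z : Finset κ := {j | ∑ i, x i * M i j = 0}
  have hZ : #Z + #{j | ∑ i, x i * M i j ≠ 0} = Fintype.card κ :=
    card_filter_add_card_filter_not _
  by_contra! hSZ
  replace hSZ : #S ≤ #Z := by omega
  -- `x` restricted to `S` is a nonzero left kernel vector of the minor on the rows `S` and
  -- any `#S` of the columns `Z`.
  let r : Fin #S → ι := fun a => S.equivFin.symm a
  let c : Fin #S → κ := fun b => Z.equivFin.symm (Fin.castLE hSZ b)
  have hr : r.Injective := fun a b h => S.equivFin.symm.injective (Subtype.ext h)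
  have hc : c.Injective := fun a b h =>
    Fin.castLE_injective hSZ (Z.equivFin.symm.injective (Subtype.ext h))
  refine hM _ r c hr hc (Matrix.exists_vecMul_eq_zero_iff.mp ⟨x ∘ r, ?_, ?_⟩)
  · obtain ⟨i, hi⟩ := Function.ne_iff.mp hx
    have hiS : i ∈ S := by simpa [S] using hi
    exact Function.ne_iff.mpr ⟨S.equivFin ⟨i, hiS⟩, by simpa [r] using hi⟩
  · funext b
    have hcZ : c b ∈ Z := (Z.equivFin.symm _).2
    calc ∑ a, x (r a) * M (r a) (c b) = ∑ i ∈ S, x i * M i (c b) :=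
          (S.equivFin.symm.sum_comp fun i : S => x i * M i (c b)).trans
            (S.sum_coe_sort fun i => x i * M i (c b))
      _ = ∑ i, x i * M i (c b) := sum_filter_of_ne fun i _ h => left_ne_zero_of_mul h
      _ = 0 := (mem_filter.mp hcZ).2

namespace Polynomial

section Semiring

variable {R : Type*} [Semiring R]

theorem support_mul_X_pow (p : R[X]) (n : ℕ) :
    (p * X ^ n).support = p.support.map (addRightEmbedding n) := by
  ext t
  simp only [mem_support_iff, coeff_mul_X_pow', mem_map, addRightEmbedding_apply]
  constructor
  · intro h
    split_ifs at h with hnt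
    · exact ⟨t - n, h, Nat.sub_add_cancel hnt⟩
    · exact absurd rfl h
  · rintro ⟨k, hk, rfl⟩
    simpa using hk

theorem card_support_mul_X_pow (p : R[X]) (n : ℕ) : #(p * X ^ n).support = #p.support := by
  rw [support_mul_X_pow, card_map]

theorem sum_card_filter_coeff_ne_zero_le {ι : Type*} [DecidableEq R] [Fintype ι]
    (p : ι → R[X]) (A : Finset ℕ) :
    ∑ t ∈ A, #{j | (p j).coeff t ≠ 0} ≤ ∑ j, #(p j).support :=
  calc ∑ t ∈ A, #{j | (p j).coeff t ≠ 0} = ∑ j, #{t ∈ A | (p j).coeff t ≠ 0} :=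
        (sum_card_bipartiteAbove_eq_sum_card_bipartiteBelow _).symm
    _ ≤ ∑ j, #(p j).support :=
        sum_le_sum fun _ _ => card_le_card fun _ ht => mem_support_iff.mpr (mem_filter.mp ht).2

theorem card_support_union_Ioc_natDegree (u : R[X]) (δ : ℕ) :
    #(u.support ∪ Ioc u.natDegree (u.natDegree + δ)) = #u.support + δ := by
  rw [card_union_of_disjoint, Nat.card_Ioc, Nat.add_sub_cancel_left]
  exact disjoint_left.mpr fun t ht ht' =>
    (mem_Ioc.mp ht').1.not_ge (le_natDegree_of_mem_supp t ht)

theorem exists_coeff_mul_X_pow_ne_zero {u : R[X]} (hu : u ≠ 0) {δ t : ℕ}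
    (ht : t ∈ u.support ∪ Ioc u.natDegree (u.natDegree + δ)) :
    ∃ i : Fin (δ + 1), (u * X ^ (i : ℕ)).coeff t ≠ 0 := by
  rcases mem_union.mp ht with ht | ht
  · exact ⟨0, by simpa using ht⟩
  · obtain ⟨hlt, hle⟩ := mem_Ioc.mp ht
    refine ⟨⟨t - u.natDegree, by omega⟩, ?_⟩
    rw [coeff_mul_X_pow', if_pos (Nat.sub_le _ _), Nat.sub_sub_self hlt.le]
    exact leadingCoeff_ne_zero.mpr hu

end Semiring

theorem coeff_mul_eq_sum_coeff_mul_X_pow {R : Type*} [CommSemiring R] {δ : ℕ} (u : R[X])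
    {p : R[X]} (hp : p.natDegree ≤ δ) (t : ℕ) :
    (u * p).coeff t = ∑ i : Fin (δ + 1), (u * X ^ (i : ℕ)).coeff t * p.coeff i := by
  conv_lhs => rw [p.as_sum_range' (δ + 1) (Nat.lt_succ_of_le hp)]
  rw [mul_sum, finsetSum_coeff, ← Fin.sum_univ_eq_sum_range]
  refine sum_congr rfl fun i _ => ?_
  rw [← C_mul_X_pow_eq_monomial, mul_left_comm, coeff_C_mul, mul_comm]

end Polynomial

theorem oneD_MDS_of_superregular_general {F : Type*} [Field F] {n δ : ℕ}
    (hn : δ + 1 ≤ n) (g : Fin n → Polynomial F)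
    (hdeg : ∀ j, (g j).natDegree ≤ δ)
    (hsr : SuperregularFamily fun (t : Fin (δ + 1)) (j : Fin n) => (g j).coeff t) :
    ∀ u : Polynomial F, u ≠ 0 → n * (δ + 1) ≤ wtP (fun j => u * g j) := by
  intro u hu
  classical
  set A := u.support ∪ Ioc u.natDegree (u.natDegree + δ)
  have hrow : ∀ t ∈ A, n + 1 ≤ #{j | (u * g j).coeff t ≠ 0} +
      #{i : Fin (δ + 1) | (u * X ^ (i : ℕ)).coeff t ≠ 0} := by
    intro t ht
    obtain ⟨i, hi⟩ := exists_coeff_mul_X_pow_ne_zero hu ht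
    have hcoeff j := coeff_mul_eq_sum_coeff_mul_X_pow u (hdeg j) t
    have hlt := hsr.card_lt_card_sum_ne_zero_add_card_ne_zero
      (x := fun i : Fin (δ + 1) => (u * X ^ (i : ℕ)).coeff t) (Function.ne_iff.mpr ⟨i, hi⟩)
    simp only [← hcoeff, Fintype.card_fin] at hlt
    exact hlt
  have hcodeword := sum_card_filter_coeff_ne_zero_le (fun j => u * g j) A
  have hwindows := sum_card_filter_coeff_ne_zero_le (fun i : Fin (δ + 1) => u * X ^ (i : ℕ)) A
  simp only [card_support_mul_X_pow, sum_const, card_univ, Fintype.card_fin, smul_eq_mul]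
    at hwindows
  have hsum := sum_le_sum hrow
  rw [sum_const, smul_eq_mul, card_support_union_Ioc_natDegree, sum_add_distrib] at hsum
  have hw : 1 ≤ #u.support := card_pos.mpr (support_nonempty.mpr hu)
  unfold wtP
  nlinarith

/-- Let `G(z) = Σ_{i=0}^{δ} G_i z^i ∈ 𝔽_q[z]^{1×n}` with `G_δ ≠ 0`
and `n ≥ δ + 1`. If the `(δ+1)×n` matrix `Φ₁(G)` stacking the coefficient vectors
`G₀,…,G_δ` is superregular, then every nonzero codeword `u(z)·G(z)` has weight at
least `n(δ+1)`; i.e. the 1D convolutional code generated by `G(z)` is MDS with free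
distance `n(δ+1)`. -/
theorem oneD_MDS_of_superregular {F : Type*} [Field F] [Fintype F] {n δ : ℕ}
    (hn : δ + 1 ≤ n) (g : Fin n → Polynomial F)
    (hdeg : ∀ j, (g j).natDegree ≤ δ)
    (htop : ∃ j, (g j).coeff δ ≠ 0)
    (hsr : SuperregularFamily fun (t : Fin (δ + 1)) (j : Fin n) => (g j).coeff t) :
    ∀ u : Polynomial F, u ≠ 0 → n * (δ + 1) ≤ wtP (fun j => u * g j) :=
  oneD_MDS_of_superregular_general hn g hdeg hsr
end

section
/- Let ℓ ∈ ℕ, ν ∈ ℕ, and let G(z) ∈ 𝔽_q[z]^{(k₀+⋯+k_{ℓ−1}+1)×n} be formed by stacking blocks G₀(z), …, G_ℓ(z), where for i = 0,…,ℓ−1 the block G_i(z) has k_i rows each of row degree ν+ℓ−i, and G_ℓ(z) is a single row of degree ν. Let 𝒢 be the L × n constant matrix obtained by stacking the coefficient matrices Φ₁(G₀(z)), …, Φ₁(G_ℓ(z)), where L = Σ_{j=0}^{ℓ−1} k_j(ν+ℓ+1−j) + ν + 1. If n ≥ L and 𝒢 is superregular, then the convolutional code generated by G(z) has free distance exactly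 n(ν+1). -/
/-- Row index type for a matrix stacked from blocks `G₀,…,G_{ℓ-1}` (block `i` having
`k i` rows) followed by a single last row `G_ℓ`. -/
abbrev RowIdx (ℓ : ℕ) (k : Fin ℓ → ℕ) : Type := (Σ i : Fin ℓ, Fin (k i)) ⊕ Unit

/-- Row index type for the stacked coefficient matrix `𝒢` of such a matrix: the
coefficient rows of a row of degree `ν+ℓ−i` (resp. `ν`) are indexed by
`Fin (ν+ℓ−i+1)` (resp. `Fin (ν+1)`). -/
abbrev CoeffIdx (ℓ ν : ℕ) (k : Fin ℓ → ℕ) : Type :=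
  (Σ i : Fin ℓ, Fin (k i) × Fin (ν + ℓ - i.1 + 1)) ⊕ Fin (ν + 1)

open Finset Polynomial

lemma Finset.sum_card_filter_comm {α β : Type*} (s : Finset α) (t : Finset β)
    (P : α → β → Prop) [∀ a b, Decidable (P a b)] :
    ∑ a ∈ s, #{b ∈ t | P a b} = ∑ b ∈ t, #{a ∈ s | P a b} :=
  sum_card_bipartiteAbove_eq_sum_card_bipartiteBelow P

lemma Polynomial.coeff_mul_eq_sum_coeff_mul_X_pow_s13 {R : Type*} [CommSemiring R] (p q : R[X])
    {d : ℕ} (hq : q.natDegree ≤ d) (s : ℕ) :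
    (p * q).coeff s = ∑ b ∈ range (d + 1), (p * X ^ b).coeff s * q.coeff b := by
  conv_lhs => rw [q.as_sum_range_C_mul_X_pow' (Nat.lt_succ_of_le hq)]
  rw [mul_sum, finsetSum_coeff]
  refine sum_congr rfl fun b _ => ?_
  rw [← coeff_mul_C, mul_left_comm, mul_comm]

section Superregular

variable {F ι κ : Type*} [Field F] {M : ι → κ → F}

lemma SuperregularFamily.comp_injective {ι' : Type*} (hM : SuperregularFamily M) {e : ι' → ι}
    (he : Function.Injective e) : SuperregularFamily fun i => M (e i) :=
  fun t r c hr hc => hM t (e ∘ r) c (he.comp hr) hc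

lemma SuperregularFamily.ne_zero (hM : SuperregularFamily M) (i : ι) (j : κ) : M i j ≠ 0 := by
  simpa using hM 1 (fun _ => i) (fun _ => j) (Function.injective_of_subsingleton _)
    (Function.injective_of_subsingleton _)

/-- The MDS property of a superregular matrix. -/
lemma SuperregularFamily.card_add_card_le [Fintype ι] [Fintype κ] [DecidableEq F]
    (hM : SuperregularFamily M) {y : ι → F} (hy : y ≠ 0) :
    Fintype.card κ + 1 ≤ #{j | ∑ p, y p * M p j ≠ 0} + #{p | y p ≠ 0} := by
  set Y : Finset ι := {p | y p ≠ 0}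
  set Z : Finset κ := {j | ∑ p, y p * M p j = 0}
  have hsplit : #{j | ∑ p, y p * M p j ≠ 0} + #Z = Fintype.card κ := by
    rw [add_comm, ← card_univ]; exact card_filter_add_card_filter_not _
  suffices #Z < #Y by omega
  by_contra! hYZ
  obtain ⟨Z', hZ'Z, hZ'⟩ := exists_subset_card_eq hYZ
  let r : Fin #Y → ι := fun a => Y.equivFin.symm a
  let c : Fin #Y → κ := fun a => Z'.equivFin.symm (a.cast hZ'.symm)
  refine hM _ r c ?_ ?_ ?_
  · exact Subtype.val_injective.comp Y.equivFin.symm.injective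
  · exact Subtype.val_injective.comp (Z'.equivFin.symm.injective.comp (Fin.cast_injective _))
  rw [← Matrix.exists_vecMul_eq_zero_iff]
  obtain ⟨p, hp⟩ := Function.ne_iff.mp hy
  refine ⟨fun a => y (r a), Function.ne_iff.mpr ⟨Y.equivFin ⟨p, by simpa [Y] using hp⟩, ?_⟩, ?_⟩
  · simpa [r] using hp
  funext b
  have hcZ : c b ∈ Z := hZ'Z (Z'.equivFin.symm _).2
  calc ∑ a, y (r a) * M (r a) (c b) = ∑ p ∈ Y, y p * M p (c b) :=
        (Y.equivFin.symm.sum_comp fun p => y p * M p (c b)).trans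
          (sum_coe_sort Y fun p => y p * M p (c b))
    _ = ∑ p, y p * M p (c b) := sum_filter_of_ne fun p _ h => left_ne_zero_of_mul h
    _ = 0 := (mem_filter.mp hcZ).2

end Superregular

section SlidingWindow

variable {F : Type*} [Field F] {ρ : Type*} (m : ρ → ℕ)

/-- The matrix `𝒢` of the paper, stacking `Φ₁` of every row of `G`. -/
noncomputable def stackedCoeffs {n : ℕ} (G : ρ → Fin n → F[X]) (p : Σ r, Fin (m r + 1))
    (j : Fin n) : F :=
  (G p.1 j).coeff p.2

/-- The row vector that multiplies `stackedCoeffs m G` to give the coefficient of `z ^ s` in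
`u(z) G(z)`. -/
noncomputable def coeffSlice (u : ρ → F[X]) (s : ℕ) (p : Σ r, Fin (m r + 1)) : F :=
  (u p.1 * X ^ (p.2 : ℕ)).coeff s

variable {m}

lemma coeff_sum_mul_eq_sum_coeffSlice_mul [Fintype ρ] {n : ℕ} {G : ρ → Fin n → F[X]}
    (hdeg : ∀ r j, (G r j).natDegree ≤ m r) (u : ρ → F[X]) (j : Fin n) (s : ℕ) :
    (∑ r, u r * G r j).coeff s = ∑ p, coeffSlice m u s p * stackedCoeffs m G p j := by
  rw [finsetSum_coeff, Fintype.sum_sigma]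
  refine sum_congr rfl fun r _ => ?_
  rw [coeff_mul_eq_sum_coeff_mul_X_pow_s13 _ _ (hdeg r j), ← Fin.sum_univ_eq_sum_range]
  rfl

lemma coeffSlice_ne_zero {u : ρ → F[X]} {r : ρ} {a s : ℕ} (ha : (u r).coeff a ≠ 0)
    (has : a ≤ s) (hsa : s ≤ a + m r) : coeffSlice m u s ≠ 0 := by
  refine Function.ne_iff.mpr ⟨⟨r, ⟨s - a, by omega⟩⟩, ?_⟩
  simpa [coeffSlice, coeff_mul_X_pow', Nat.sub_sub_self has] using ha

lemma coeff_of_coeffSlice_ne_zero {u : ρ → F[X]} {s : ℕ} {r : ρ} {b : Fin (m r + 1)}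
    (h : coeffSlice m u s ⟨r, b⟩ ≠ 0) : (b : ℕ) ≤ s ∧ (u r).coeff (s - b) ≠ 0 := by
  by_cases hs : (b : ℕ) ≤ s
  · simpa [coeffSlice, coeff_mul_X_pow', hs] using h
  · simp [coeffSlice, coeff_mul_X_pow', hs] at h

/-- Every nonzero `u(z)` has a last block `[a₀, δ]` of consecutive nonzero slices that is closed:
a nonzero coefficient of `u` whose slices meet the block has all of them in it. -/
lemma exists_closed_window [Fintype ρ] {u : ρ → F[X]} (hu : u ≠ 0) :
    ∃ a₀ δ : ℕ, (∃ r, a₀ + m r ≤ δ) ∧ (∀ s ∈ Icc a₀ δ, coeffSlice m u s ≠ 0) ∧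
      ∀ r a s, (u r).coeff a ≠ 0 → a ≤ s → s ≤ a + m r → s ∈ Icc a₀ δ →
        a₀ ≤ a ∧ a + m r ≤ δ := by
  classical
  obtain ⟨r₁, hr₁⟩ := Function.ne_iff.mp hu
  obtain ⟨rt, hrt, htop⟩ := exists_max_image {r | u r ≠ 0} (fun r => (u r).natDegree + m r)
    ⟨r₁, by simpa using hr₁⟩
  rw [mem_filter] at hrt
  set δ := (u rt).natDegree + m rt
  have hlead : (u rt).coeff (u rt).natDegree ≠ 0 := by simpa using hrt.2
  have hδ : ∀ r a, (u r).coeff a ≠ 0 → a + m r ≤ δ := fun r a ha => by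
    have := htop r (by simpa using fun h => ha (by simp [h]))
    have := le_natDegree_of_ne_zero ha
    omega
  have hδact : ∀ s ∈ Icc δ δ, coeffSlice m u s ≠ 0 := fun s hs =>
    coeffSlice_ne_zero hlead (by simp at hs; omega) (by simp at hs; omega)
  have hex : ∃ t, ∀ s ∈ Icc t δ, coeffSlice m u s ≠ 0 := ⟨δ, hδact⟩
  have hmin : ∀ r a s, (u r).coeff a ≠ 0 → a ≤ s → s ≤ a + m r → s ∈ Icc (Nat.find hex) δ →
      Nat.find hex ≤ a := by
    intro r a s ha has hsa hs
    rw [mem_Icc] at hs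
    refine Nat.find_min' hex fun s' hs' => ?_
    rw [mem_Icc] at hs'
    by_cases h : Nat.find hex ≤ s'
    · exact Nat.find_spec hex s' (mem_Icc.mpr ⟨h, hs'.2⟩)
    · exact coeffSlice_ne_zero ha hs'.1 (by omega)
  have hfind : Nat.find hex ≤ δ := Nat.find_min' hex hδact
  refine ⟨Nat.find hex, δ, ⟨rt, ?_⟩, Nat.find_spec hex, fun r a s ha has hsa hs =>
    ⟨hmin r a s ha has hsa hs, hδ r a ha⟩⟩
  have := hmin rt _ δ hlead le_self_add le_rfl (mem_Icc.mpr ⟨hfind, le_rfl⟩)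
  omega

lemma sum_card_coeffSlice_support_le [Fintype ρ] [DecidableEq F] {u : ρ → F[X]} {a₀ δ : ℕ}
    (hclosed : ∀ r a s, (u r).coeff a ≠ 0 → a ≤ s → s ≤ a + m r → s ∈ Icc a₀ δ →
      a₀ ≤ a ∧ a + m r ≤ δ) :
    ∑ s ∈ Icc a₀ δ, #{p | coeffSlice m u s p ≠ 0} ≤ ∑ r, (m r + 1) * (δ + 1 - a₀ - m r) := by
  rw [sum_card_filter_comm, Fintype.sum_sigma]
  refine sum_le_sum fun r _ => ?_
  refine (sum_le_card_nsmul _ _ (δ + 1 - a₀ - m r) fun b _ => ?_).trans_eq (by simp)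
  -- a slice `s` sees row `r` at position `b` only through the coefficient `u_r[s - b]`
  calc #{s ∈ Icc a₀ δ | coeffSlice m u s ⟨r, b⟩ ≠ 0}
      ≤ #(Ico a₀ (δ + 1 - m r)) := by
        refine card_le_card_of_injOn (· - b) (fun s hs => ?_) (fun s₁ hs₁ s₂ hs₂ h => ?_)
        · rw [mem_coe, mem_filter] at hs
          obtain ⟨hbs, hcoeff⟩ := coeff_of_coeffSlice_ne_zero hs.2
          have := hclosed r _ s hcoeff (Nat.sub_le s b) (by omega) hs.1
          rw [mem_coe, mem_Ico]
          dsimp only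
          omega
        · rw [mem_coe, mem_filter] at hs₁ hs₂
          have := (coeff_of_coeffSlice_ne_zero hs₁.2).1
          have := (coeff_of_coeffSlice_ne_zero hs₂.2).1
          simp only at h
          omega
    _ = δ + 1 - a₀ - m r := by rw [Nat.card_Ico]; omega

lemma sum_mul_sub_add_mul_le [Fintype ρ] {r₀ : ρ} (hr₀ : ∀ r ≠ r₀, m r₀ < m r)
    {n c : ℕ} (hn : ∑ r, (m r + 1) ≤ n) (hc : m r₀ + 1 ≤ c) :
    ∑ r, (m r + 1) * (c - m r) + n * (m r₀ + 1) ≤ c * (n + 1) := by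
  classical
  obtain ⟨e, rfl⟩ : ∃ e, c = m r₀ + 1 + e := ⟨c - (m r₀ + 1), by omega⟩
  have hterm : ∀ r, (m r + 1) * (m r₀ + 1 + e - m r) ≤
      e * (m r + 1) + if r = r₀ then m r₀ + 1 else 0 := by
    intro r
    split_ifs with h
    · subst h
      rw [show m r + 1 + e - m r = e + 1 by omega]
      exact le_of_eq (by ring)
    · rw [mul_comm e, add_zero]
      exact Nat.mul_le_mul_left _ (by have := hr₀ r h; omega)
  calc ∑ r, (m r + 1) * (m r₀ + 1 + e - m r) + n * (m r₀ + 1)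
      ≤ e * ∑ r, (m r + 1) + (m r₀ + 1) + n * (m r₀ + 1) := by
        gcongr
        refine (sum_le_sum fun r _ => hterm r).trans_eq ?_
        rw [sum_add_distrib, ← mul_sum, sum_ite_eq']
        simp
    _ ≤ e * n + (m r₀ + 1) + n * (m r₀ + 1) := by gcongr
    _ ≤ (m r₀ + 1 + e) * (n + 1) := by nlinarith

lemma sum_card_coeff_ne_zero_le_wtP {n : ℕ} (w : Fin n → F[X]) (S : Finset ℕ) [DecidableEq F] :
    ∑ s ∈ S, #{j | (w j).coeff s ≠ 0} ≤ wtP w := by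
  rw [sum_card_filter_comm, wtP]
  exact sum_le_sum fun j _ => card_le_card fun s hs => mem_support_iff.mpr (mem_filter.mp hs).2

theorem wtP_ge_of_superregular [Fintype ρ] {n : ℕ} {G : ρ → Fin n → F[X]}
    (hdeg : ∀ r j, (G r j).natDegree ≤ m r) (hsr : SuperregularFamily (stackedCoeffs m G))
    {r₀ : ρ} (hr₀ : ∀ r ≠ r₀, m r₀ < m r) (hn : ∑ r, (m r + 1) ≤ n)
    {u : ρ → F[X]} (hu : u ≠ 0) :
    n * (m r₀ + 1) ≤ wtP fun j => ∑ r, u r * G r j := by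
  classical
  obtain ⟨a₀, δ, ⟨r, hr⟩, hactive, hclosed⟩ := exists_closed_window (m := m) hu
  have hslices : ∀ s ∈ Icc a₀ δ, n + 1 ≤
      #{j | (∑ r, u r * G r j).coeff s ≠ 0} + #{p | coeffSlice m u s p ≠ 0} := by
    intro s hs
    simpa [coeff_sum_mul_eq_sum_coeffSlice_mul hdeg] using hsr.card_add_card_le (hactive s hs)
  have hsum := sum_le_sum hslices
  rw [sum_const, Nat.card_Icc, smul_eq_mul, sum_add_distrib] at hsum
  have hsupp := sum_card_coeffSlice_support_le hclosed
  have hwt := sum_card_coeff_ne_zero_le_wtP (fun j => ∑ r, u r * G r j) (Icc a₀ δ)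
  have hmr : m r₀ ≤ m r := by
    by_cases h : r = r₀
    · rw [h]
    · exact (hr₀ r h).le
  have harith := sum_mul_sub_add_mul_le hr₀ hn (c := δ + 1 - a₀) (by omega)
  omega

lemma wtP_eq_of_superregular [Fintype ρ] {n : ℕ} {G : ρ → Fin n → F[X]}
    (hsr : SuperregularFamily (stackedCoeffs m G)) {r : ρ} (hdeg : ∀ j, (G r j).natDegree ≤ m r) :
    wtP (G r) = n * (m r + 1) := by
  have hsupp : ∀ j, (G r j).support = range (m r + 1) := fun j => by
    ext t
    rw [mem_support_iff, mem_range]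
    refine ⟨fun ht => ?_, fun ht => hsr.ne_zero ⟨r, ⟨t, ht⟩⟩ j⟩
    by_contra! h
    exact ht (coeff_eq_zero_of_natDegree_lt ((hdeg j).trans_lt h))
  simp [wtP, hsupp]

end SlidingWindow

section StackedBlocks

variable {ℓ : ℕ} {k : Fin ℓ → ℕ}

def rowDegree (ν : ℕ) : RowIdx ℓ k → ℕ :=
  Sum.elim (fun q => ν + ℓ - q.1) fun _ => ν

lemma rowDegree_inr_lt (ν : ℕ) :
    ∀ r : RowIdx ℓ k, r ≠ Sum.inr () →
      rowDegree ν (Sum.inr () : RowIdx ℓ k) < rowDegree ν r := by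
  rintro (⟨i, _⟩ | ⟨⟩) h
  · simp only [rowDegree, Sum.elim_inl, Sum.elim_inr]
    omega
  · exact absurd rfl h

lemma sum_rowDegree_add_one (ν : ℕ) :
    ∑ r : RowIdx ℓ k, (rowDegree ν r + 1) = ∑ i : Fin ℓ, k i * (ν + ℓ + 1 - i.1) + ν + 1 := by
  rw [Fintype.sum_sum_type, Fintype.sum_sigma]
  simp only [rowDegree, Sum.elim_inl, Sum.elim_inr, sum_const, card_univ, Fintype.card_fin,
    smul_eq_mul, Fintype.card_unit, one_mul]
  rw [← add_assoc]
  congr 2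
  exact sum_congr rfl fun i _ => congrArg (k i * ·) (by omega)

def coeffIdxEquiv (ν : ℕ) : (Σ r : RowIdx ℓ k, Fin (rowDegree ν r + 1)) ≃ CoeffIdx ℓ ν k where
  toFun
    | ⟨.inl ⟨i, r⟩, b⟩ => .inl ⟨i, (r, b)⟩
    | ⟨.inr (), t⟩ => .inr t
  invFun
    | .inl ⟨i, (r, b)⟩ => ⟨.inl ⟨i, r⟩, b⟩
    | .inr t => ⟨.inr (), t⟩
  left_inv := by rintro ⟨⟨⟨i, r⟩⟩ | ⟨⟩, b⟩ <;> rfl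
  right_inv := by rintro (⟨i, r, b⟩ | t) <;> rfl

end StackedBlocks

theorem oneD_free_distance_exact_general {F : Type*} [Field F] {n ℓ ν : ℕ}
    (k : Fin ℓ → ℕ) (G : RowIdx ℓ k → Fin n → Polynomial F)
    (hrow : ∀ (i : Fin ℓ) (r : Fin (k i)) (j : Fin n),
      (G (Sum.inl ⟨i, r⟩) j).natDegree ≤ ν + ℓ - i.1)
    (hlast : ∀ j, (G (Sum.inr ()) j).natDegree ≤ ν)
    (hn : (∑ i : Fin ℓ, k i * (ν + ℓ + 1 - i.1)) + ν + 1 ≤ n)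
    (hsr : SuperregularFamily fun (p : CoeffIdx ℓ ν k) (j : Fin n) =>
      Sum.elim (fun q : Σ i : Fin ℓ, Fin (k i) × Fin (ν + ℓ - i.1 + 1) =>
          (G (Sum.inl ⟨q.1, q.2.1⟩) j).coeff q.2.2)
        (fun t : Fin (ν + 1) => (G (Sum.inr ()) j).coeff t) p) :
    (∀ u : RowIdx ℓ k → Polynomial F, u ≠ 0 →
        n * (ν + 1) ≤ wtP (fun j => ∑ i, u i * G i j)) ∧
      (∃ u : RowIdx ℓ k → Polynomial F, u ≠ 0 ∧
        wtP (fun j => ∑ i, u i * G i j) = n * (ν + 1)) := by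
  have hdeg : ∀ r j, (G r j).natDegree ≤ rowDegree ν r := by
    rintro (⟨i, r⟩ | ⟨⟩) j
    exacts [hrow i r j, hlast j]
  have hsr' : SuperregularFamily (stackedCoeffs (rowDegree ν) G) := by
    convert hsr.comp_injective (coeffIdxEquiv ν).injective using 1
    funext ⟨r, b⟩ j
    rcases r with ⟨i, r⟩ | ⟨⟩ <;> rfl
  have hL := (sum_rowDegree_add_one (k := k) ν).trans_le hn
  refine ⟨fun u hu => wtP_ge_of_superregular hdeg hsr' (rowDegree_inr_lt ν) hL hu,
    Pi.single (Sum.inr ()) 1, by simp, ?_⟩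
  simpa [Pi.single_apply, rowDegree] using wtP_eq_of_superregular hsr' (hdeg (Sum.inr ()))

/-- With `G(z)` stacked from blocks `G₀(z),…,G_{ℓ−1}(z)` (block `i`
having `k i` rows, each of row degree `ν+ℓ−i`) and a single last row `G_ℓ(z)` of degree
`ν`, let `𝒢` be the `L × n` constant matrix stacking `Φ₁(G₀(z)),…,Φ₁(G_ℓ(z))`, where
`L = Σ_{j<ℓ} k_j(ν+ℓ+1−j) + ν + 1`. If `n ≥ L` and `𝒢` is superregular, then the code
generated by `G(z)` has free distance exactly `n(ν+1)`. -/
theorem oneD_free_distance_exact {F : Type*} [Field F] [Fintype F] {n ℓ ν : ℕ}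
    (k : Fin ℓ → ℕ) (G : RowIdx ℓ k → Fin n → Polynomial F)
    (hG : LinearIndependent (Polynomial F) G)
    (hrow : ∀ (i : Fin ℓ) (r : Fin (k i)) (j : Fin n),
      (G (Sum.inl ⟨i, r⟩) j).natDegree ≤ ν + ℓ - i.1)
    (hrow' : ∀ (i : Fin ℓ) (r : Fin (k i)), ∃ j, (G (Sum.inl ⟨i, r⟩) j).coeff (ν + ℓ - i.1) ≠ 0)
    (hlast : ∀ j, (G (Sum.inr ()) j).natDegree ≤ ν)
    (hlast' : ∃ j, (G (Sum.inr ()) j).coeff ν ≠ 0)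
    (hn : (∑ i : Fin ℓ, k i * (ν + ℓ + 1 - i.1)) + ν + 1 ≤ n)
    (hsr : SuperregularFamily fun (p : CoeffIdx ℓ ν k) (j : Fin n) =>
      Sum.elim (fun q : Σ i : Fin ℓ, Fin (k i) × Fin (ν + ℓ - i.1 + 1) =>
          (G (Sum.inl ⟨q.1, q.2.1⟩) j).coeff q.2.2)
        (fun t : Fin (ν + 1) => (G (Sum.inr ()) j).coeff t) p) :
    (∀ u : RowIdx ℓ k → Polynomial F, u ≠ 0 →
        n * (ν + 1) ≤ wtP (fun j => ∑ i, u i * G i j)) ∧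
      (∃ u : RowIdx ℓ k → Polynomial F, u ≠ 0 ∧
        wtP (fun j => ∑ i, u i * G i j) = n * (ν + 1)) :=
  oneD_free_distance_exact_general k G hrow hlast hn hsr
end
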